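/- Let S be a semicopula and let ⋆ : [0,1]² → [0,1] be nondecreasing and left-continuous with 0 ⋆ 1 = 1 ⋆ 0 = 0. Then the Chebyshev type inequality I_S(f⋆g) ≥ I_S(f) ⋆ I_S(g) holds for every capacity m on any measurable space (X,𝒜) and all f,g ∈ F^1 comonotone on X if and only if S(a⋆b, c) ≥ max( S(a,c) ⋆ b, a ⋆ S(b,c) ) for all a,b,c ∈ [0,1]. -/

import Mathlib

/-!
For comonotone `f` and `g` the superlevel sets `{α ≤ f}` and `{β ≤ g}` are nested, and the
smaller one lies in `{α ⋆ β ≤ f ⋆ g}`. Together with `S(α, m A) ≤ α` this lets the condition bound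
`S(α, m{α ≤ f}) ⋆ S(β, m{β ≤ g})` by the single term `S(α ⋆ β, m{α ⋆ β ≤ f ⋆ g})` of
`I_S(f ⋆ g)`; left-continuity of `⋆` in each variable then carries the bound over to the suprema.

Conversely, take the two-point space `Bool` with the capacity that is `c` on `{true}`. For
`f = a • 1_{true}` and `g ≡ b` one has `I_S(f) = S(a, c)`, `I_S(g) = b`, and, because `0 ⋆ b = 0`,
`f ⋆ g = (a ⋆ b) • 1_{true}`, so `I_S(f ⋆ g) = S(a ⋆ b, c)`: the inequality becomes
`S(a, c) ⋆ b ≤ S(a ⋆ b, c)`. Exchanging the roles of `f` and `g` gives the other half.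
-/

open Set ENNReal

noncomputable def uSugeno {X : Type*} (ybar : ℝ≥0∞) (op : ℝ≥0∞ → ℝ≥0∞ → ℝ≥0∞)
    (m : Set X → ℝ≥0∞) (D : Set X) (f : X → ℝ≥0∞) : ℝ≥0∞ :=
  ⨆ t ∈ Set.Iic ybar, op t (m (D ∩ {x | t ≤ f x}))

noncomputable def qInt {X : Type*} (oti : ℝ≥0∞ → ℝ≥0∞ → ℝ≥0∞)
    (m : Set X → ℝ≥0∞) (f : X → ℝ≥0∞) : ℝ≥0∞ :=
  ⨆ t ∈ Set.Iic (1 : ℝ≥0∞), oti (m {x | t ≤ f x}) t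

def Mono2On (op : ℝ≥0∞ → ℝ≥0∞ → ℝ≥0∞) (s t : Set ℝ≥0∞) : Prop :=
  ∀ ⦃a₁⦄, a₁ ∈ s → ∀ ⦃b₁⦄, b₁ ∈ t → ∀ ⦃a₂⦄, a₂ ∈ s → ∀ ⦃b₂⦄, b₂ ∈ t →
    a₁ ≤ a₂ → b₁ ≤ b₂ → op a₁ b₁ ≤ op a₂ b₂

def LeftContOn (g : ℝ≥0∞ → ℝ≥0∞) (s : Set ℝ≥0∞) : Prop :=
  ∀ x ∈ s, ContinuousWithinAt g (Set.Iic x) x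

def RightContOn (g : ℝ≥0∞ → ℝ≥0∞) (s : Set ℝ≥0∞) : Prop :=
  ∀ x ∈ s, ContinuousWithinAt g (Set.Ici x) x

def LeftCont2On (op : ℝ≥0∞ → ℝ≥0∞ → ℝ≥0∞) (s t : Set ℝ≥0∞) : Prop :=
  (∀ b ∈ t, ∀ a ∈ s, ContinuousWithinAt (fun x => op x b) (Set.Iic a) a) ∧
  (∀ a ∈ s, ∀ b ∈ t, ContinuousWithinAt (fun y => op a y) (Set.Iic b) b)

def mRange {X : Type*} [MeasurableSpace X] (m : Set X → ℝ≥0∞) : Set ℝ≥0∞ :=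
  {c | ∃ A : Set X, MeasurableSet A ∧ m A = c}

def MonotoneMeasure {X : Type*} [MeasurableSpace X] (m : Set X → ℝ≥0∞) : Prop :=
  m ∅ = 0 ∧ 0 < m Set.univ ∧
    ∀ ⦃A B : Set X⦄, MeasurableSet A → MeasurableSet B → A ⊆ B → m A ≤ m B

def IsCapacity {X : Type*} [MeasurableSpace X] (m : Set X → ℝ≥0∞) : Prop :=
  m ∅ = 0 ∧ m Set.univ = 1 ∧
    ∀ ⦃A B : Set X⦄, MeasurableSet A → MeasurableSet B → A ⊆ B → m A ≤ m B

def ComonotoneOn {X : Type*} (D : Set X) (f g : X → ℝ≥0∞) : Prop :=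
  ∀ x ∈ D, ∀ y ∈ D, f x < f y → g x ≤ g y

def IsSemicopula (S : ℝ≥0∞ → ℝ≥0∞ → ℝ≥0∞) : Prop :=
  Mono2On S (Set.Iic 1) (Set.Iic 1) ∧
    ∀ a ∈ Set.Iic (1 : ℝ≥0∞), S a 1 = a ∧ S 1 a = a

def MPosDep {X : Type*} (m : Set X → ℝ≥0∞) (tri : ℝ≥0∞ → ℝ≥0∞ → ℝ≥0∞)
    (k : ℝ≥0∞) (A B : Set X) (f g : X → ℝ≥0∞) : Prop :=
  ∀ α ∈ Set.Iic k, ∀ β ∈ Set.Iic k,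
    tri (m (A ∩ {x | α ≤ f x})) (m (B ∩ {x | β ≤ g x})) ≤
      m (A ∩ B ∩ {x | α ≤ f x} ∩ {x | β ≤ g x})

lemma map_iSup_le_iSup_map_of_continuousWithinAt {α β ι : Type*} [CompleteLinearOrder α]
    [TopologicalSpace α] [OrderTopology α] [CompleteLinearOrder β] [TopologicalSpace β]
    [ClosedIicTopology β] [Nonempty ι] {φ : α → β} {A : ι → α}
    (hφ : ContinuousWithinAt φ (Iic (⨆ i, A i)) (⨆ i, A i)) :
    φ (⨆ i, A i) ≤ ⨆ i, φ (A i) := by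
  have hmem : φ (⨆ i, A i) ∈ closure (φ '' range A) :=
    (hφ.mono (range_subset_iff.2 (le_iSup A))).mem_closure_image
      (sSup_mem_closure (range_nonempty A))
  refine closure_minimal ?_ isClosed_Iic hmem
  rintro _ ⟨_, ⟨i, rfl⟩, rfl⟩
  exact le_iSup (fun i => φ (A i)) i

lemma measurableSet_of_le_imp_mem {X α : Type*} [MeasurableSpace X] [LinearOrder α]
    [TopologicalSpace α] [OrderClosedTopology α] [MeasurableSpace α] [OpensMeasurableSpace α]
    {φ : X → α} (hφ : Measurable φ) {E : Set X} (hE : ∀ x ∈ E, ∀ y, φ x ≤ φ y → y ∈ E) :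
    MeasurableSet E := by
  have hEU : E = φ ⁻¹' upperClosure (φ '' E) := by
    ext y
    refine ⟨fun hy => subset_upperClosure (mem_image_of_mem φ hy), ?_⟩
    rintro ⟨_, ⟨x, hx, rfl⟩, hxy⟩
    exact hE x hx y hxy
  rw [hEU]
  exact hφ (upperClosure (φ '' E)).upper.ordConnected.measurableSet

namespace ComonotoneOn

variable {X : Type*} {f g : X → ℝ≥0∞}

lemma le_and_le_or (h : ComonotoneOn univ f g) (x y : X) :
    (f x ≤ f y ∧ g x ≤ g y) ∨ (f y ≤ f x ∧ g y ≤ g x) := by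
  rcases lt_trichotomy (f x) (f y) with hlt | heq | hgt
  · exact Or.inl ⟨hlt.le, h x (mem_univ x) y (mem_univ y) hlt⟩
  · rcases le_total (g x) (g y) with hg | hg
    · exact Or.inl ⟨heq.le, hg⟩
    · exact Or.inr ⟨heq.ge, hg⟩
  · exact Or.inr ⟨hgt.le, h y (mem_univ y) x (mem_univ x) hgt⟩

lemma setOf_le_subset_or (h : ComonotoneOn univ f g) (α β : ℝ≥0∞) :
    {x | α ≤ f x} ⊆ {x | β ≤ g x} ∨ {x | β ≤ g x} ⊆ {x | α ≤ f x} := by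
  by_contra! hne
  obtain ⟨x, hxf, hxg⟩ := not_subset.mp hne.1
  obtain ⟨y, hyg, hyf⟩ := not_subset.mp hne.2
  rcases h.le_and_le_or x y with ⟨hf, -⟩ | ⟨-, hg⟩
  · exact hyf (le_trans hxf hf)
  · exact hxg (le_trans hyg hg)

lemma le_and_le_of_add_le (h : ComonotoneOn univ f g) {x y : X} (hfx : f x ≠ ∞)
    (hgx : g x ≠ ∞) (hxy : f x + g x ≤ f y + g y) : f x ≤ f y ∧ g x ≤ g y := by
  refine (h.le_and_le_or x y).elim id fun ⟨hf, hg⟩ => ⟨?_, ?_⟩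
  · exact (ENNReal.add_le_add_iff_right hgx).1 (hxy.trans (add_le_add_right hg _))
  · exact (ENNReal.add_le_add_iff_left hfx).1 (hxy.trans (add_le_add_left hf _))

/-- `star` need not be measurable; comonotonicity makes these sets upward closed along `f + g`. -/
lemma measurableSet_le_star [MeasurableSpace X] (h : ComonotoneOn univ f g)
    (hf : Measurable f) (hg : Measurable g) (hf1 : ∀ x, f x ≤ 1) (hg1 : ∀ x, g x ≤ 1)
    {star : ℝ≥0∞ → ℝ≥0∞ → ℝ≥0∞} (hstar_mono : Mono2On star (Iic 1) (Iic 1)) (t : ℝ≥0∞) :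
    MeasurableSet {x | t ≤ star (f x) (g x)} := by
  refine measurableSet_of_le_imp_mem (hf.add hg) fun x hx y hxy => ?_
  obtain ⟨hfxy, hgxy⟩ := h.le_and_le_of_add_le (ne_top_of_le_ne_top one_ne_top (hf1 x))
    (ne_top_of_le_ne_top one_ne_top (hg1 x)) hxy
  exact le_trans hx (hstar_mono (hf1 x) (hg1 x) (hf1 y) (hg1 y) hfxy hgxy)

end ComonotoneOn

namespace IsSemicopula

variable {S : ℝ≥0∞ → ℝ≥0∞ → ℝ≥0∞} {x y : ℝ≥0∞}

lemma le_left (hS : IsSemicopula S) (hx : x ≤ 1) (hy : y ≤ 1) : S x y ≤ x :=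
  (hS.1 hx hy hx self_mem_Iic le_rfl hy).trans (hS.2 x hx).1.le

lemma le_right (hS : IsSemicopula S) (hx : x ≤ 1) (hy : y ≤ 1) : S x y ≤ y :=
  (hS.1 hx hy self_mem_Iic hy hx le_rfl).trans (hS.2 y hy).2.le

lemma le_one (hS : IsSemicopula S) (hx : x ≤ 1) (hy : y ≤ 1) : S x y ≤ 1 :=
  (hS.le_left hx hy).trans hx

end IsSemicopula

lemma IsCapacity.le_one {X : Type*} [MeasurableSpace X] {m : Set X → ℝ≥0∞} (hm : IsCapacity m)
    {A : Set X} (hA : MeasurableSet A) : m A ≤ 1 :=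
  hm.2.1 ▸ hm.2.2 hA MeasurableSet.univ (subset_univ A)

section uSugeno

variable {X : Type*} {S : ℝ≥0∞ → ℝ≥0∞ → ℝ≥0∞} {m : Set X → ℝ≥0∞} {h : X → ℝ≥0∞}

lemma le_uSugeno {ybar t : ℝ≥0∞} {op : ℝ≥0∞ → ℝ≥0∞ → ℝ≥0∞} {D : Set X} (ht : t ≤ ybar) :
    op t (m (D ∩ {x | t ≤ h x})) ≤ uSugeno ybar op m D h :=
  le_iSup₂ (f := fun t (_ : t ∈ Iic ybar) => op t (m (D ∩ {x | t ≤ h x}))) t ht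

variable [MeasurableSpace X]

lemma le_uSugeno_of_subset (hS : IsSemicopula S) (hm : IsCapacity m) {t : ℝ≥0∞} (ht : t ≤ 1)
    {A : Set X} (hA : MeasurableSet A) (hE : MeasurableSet {x | t ≤ h x})
    (hAE : A ⊆ {x | t ≤ h x}) : S t (m A) ≤ uSugeno 1 S m univ h := by
  rw [← univ_inter {x | t ≤ h x}] at hE hAE
  exact (hS.1 ht (hm.le_one hA) ht (hm.le_one hE) le_rfl (hm.2.2 hA hE hAE)).trans
    (le_uSugeno ht)

lemma uSugeno_le_one (hS : IsSemicopula S) (hm : IsCapacity m) (hh : Measurable h) :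
    uSugeno 1 S m univ h ≤ 1 :=
  iSup₂_le fun _ ht => hS.le_one ht (hm.le_one (MeasurableSet.univ.inter (hh measurableSet_Ici)))

lemma uSugeno_indicator (hS : IsSemicopula S) (hm : IsCapacity m) {A : Set X}
    (hA : MeasurableSet A) {v : ℝ≥0∞} (hv : v ≤ 1) :
    uSugeno 1 S m univ (A.indicator fun _ => v) = S v (m A) := by
  refine le_antisymm (iSup₂_le fun t ht => ?_) ?_
  · have hL : MeasurableSet (univ ∩ {x | t ≤ A.indicator (fun _ => v) x}) :=
      MeasurableSet.univ.inter (measurableSet_le measurable_const (measurable_const.indicator hA))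
    rcases eq_or_ne t 0 with rfl | ht0
    · exact (hS.le_left ht (hm.le_one hL)).trans zero_le
    have hLA : univ ∩ {x | t ≤ A.indicator (fun _ => v) x} ⊆ A := by
      rintro x ⟨-, hx⟩
      by_contra hxA
      simp [indicator_of_notMem hxA, ht0] at hx
    rcases le_or_gt t v with htv | hvt
    · exact hS.1 ht (hm.le_one hL) hv (hm.le_one hA) htv (hm.2.2 hL hA hLA)
    · have hL0 : univ ∩ {x | t ≤ A.indicator (fun _ => v) x} = ∅ := by
        refine eq_empty_of_forall_notMem ?_
        rintro x ⟨-, hx⟩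
        have hxv : A.indicator (fun _ => v) x ≤ v := indicator_le_self' (fun _ _ => zero_le) x
        exact (hxv.trans_lt hvt).not_ge hx
      rw [hL0, hm.1]
      exact (hS.le_right ht zero_le).trans zero_le
  · rcases eq_or_ne v 0 with rfl | _
    · exact (hS.le_left zero_le (hm.le_one hA)).trans zero_le
    refine le_uSugeno_of_subset hS hm hv hA
      (measurableSet_le measurable_const (measurable_const.indicator hA)) fun x hx => ?_
    simp [indicator_of_mem hx]

lemma uSugeno_const (hS : IsSemicopula S) (hm : IsCapacity m) {v : ℝ≥0∞} (hv : v ≤ 1) :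
    uSugeno 1 S m univ (fun _ => v) = v := by
  have h := uSugeno_indicator hS hm MeasurableSet.univ hv
  rwa [indicator_univ, hm.2.1, (hS.2 v hv).1] at h

end uSugeno

def ChebyshevInequality (X : Type*) [MeasurableSpace X] (S star : ℝ≥0∞ → ℝ≥0∞ → ℝ≥0∞) :
    Prop :=
  ∀ m : Set X → ℝ≥0∞, IsCapacity m → ∀ f g : X → ℝ≥0∞, Measurable f → Measurable g →
    (∀ x, f x ≤ 1) → (∀ x, g x ≤ 1) → ComonotoneOn univ f g →
      star (uSugeno 1 S m univ f) (uSugeno 1 S m univ g)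
        ≤ uSugeno 1 S m univ fun x => star (f x) (g x)

section Sufficiency

variable {X : Type*} [MeasurableSpace X] {S star : ℝ≥0∞ → ℝ≥0∞ → ℝ≥0∞}

lemma star_le_uSugeno_star (hS : IsSemicopula S)
    (hstar_maps : ∀ a ∈ Iic (1 : ℝ≥0∞), ∀ b ∈ Iic (1 : ℝ≥0∞), star a b ∈ Iic 1)
    (hstar_mono : Mono2On star (Iic 1) (Iic 1))
    (hcond : ∀ a ∈ Iic (1 : ℝ≥0∞), ∀ b ∈ Iic (1 : ℝ≥0∞), ∀ c ∈ Iic (1 : ℝ≥0∞),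
      max (star (S a c) b) (star a (S b c)) ≤ S (star a b) c)
    {m : Set X → ℝ≥0∞} (hm : IsCapacity m) {f g : X → ℝ≥0∞} (hf : Measurable f)
    (hg : Measurable g) (hf1 : ∀ x, f x ≤ 1) (hg1 : ∀ x, g x ≤ 1)
    (hcom : ComonotoneOn univ f g) {α β : ℝ≥0∞} (hα : α ≤ 1) (hβ : β ≤ 1) :
    star (S α (m (univ ∩ {x | α ≤ f x}))) (S β (m (univ ∩ {x | β ≤ g x})))
      ≤ uSugeno 1 S m univ fun x => star (f x) (g x) := by
  simp only [univ_inter]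
  set A := {x | α ≤ f x}
  set B := {x | β ≤ g x}
  have hA : MeasurableSet A := hf measurableSet_Ici
  have hB : MeasurableSet B := hg measurableSet_Ici
  have hmA := hm.le_one hA
  have hmB := hm.le_one hB
  have hαβ : star α β ≤ 1 := hstar_maps α hα β hβ
  have hE := hcom.measurableSet_le_star hf hg hf1 hg1 hstar_mono (star α β)
  have hABE : A ∩ B ⊆ {x | star α β ≤ star (f x) (g x)} := fun x hx =>
    hstar_mono hα hβ (hf1 x) (hg1 x) hx.1 hx.2
  rcases hcom.setOf_le_subset_or α β with hAB | hBA
  · calc star (S α (m A)) (S β (m B)) ≤ star (S α (m A)) β :=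
          hstar_mono (hS.le_one hα hmA) (hS.le_one hβ hmB) (hS.le_one hα hmA) hβ le_rfl
            (hS.le_left hβ hmB)
      _ ≤ S (star α β) (m A) := (le_max_left _ _).trans (hcond α hα β hβ _ hmA)
      _ ≤ _ := le_uSugeno_of_subset hS hm hαβ hA hE (by rwa [inter_eq_left.2 hAB] at hABE)
  · calc star (S α (m A)) (S β (m B)) ≤ star α (S β (m B)) :=
          hstar_mono (hS.le_one hα hmA) (hS.le_one hβ hmB) hα (hS.le_one hβ hmB)
            (hS.le_left hα hmA) le_rfl
      _ ≤ S (star α β) (m B) := (le_max_right _ _).trans (hcond α hα β hβ _ hmB)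
      _ ≤ _ := le_uSugeno_of_subset hS hm hαβ hB hE (by rwa [inter_eq_right.2 hBA] at hABE)

theorem chebyshevInequality_of_condition (hS : IsSemicopula S)
    (hstar_maps : ∀ a ∈ Iic (1 : ℝ≥0∞), ∀ b ∈ Iic (1 : ℝ≥0∞), star a b ∈ Iic 1)
    (hstar_mono : Mono2On star (Iic 1) (Iic 1)) (hstar_lc : LeftCont2On star (Iic 1) (Iic 1))
    (hcond : ∀ a ∈ Iic (1 : ℝ≥0∞), ∀ b ∈ Iic (1 : ℝ≥0∞), ∀ c ∈ Iic (1 : ℝ≥0∞),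
      max (star (S a c) b) (star a (S b c)) ≤ S (star a b) c) :
    ChebyshevInequality X S star := by
  intro m hm f g hf hg hf1 hg1 hcom
  set F : Iic (1 : ℝ≥0∞) → ℝ≥0∞ := fun α => S α (m (univ ∩ {x | (α : ℝ≥0∞) ≤ f x}))
  set G : Iic (1 : ℝ≥0∞) → ℝ≥0∞ := fun β => S β (m (univ ∩ {x | (β : ℝ≥0∞) ≤ g x}))
  have hF : uSugeno 1 S m univ f = ⨆ α, F α := iSup_subtype'
  have hG : uSugeno 1 S m univ g = ⨆ β, G β := iSup_subtype'
  have hF1 : ∀ α, F α ≤ 1 := fun α => (le_iSup F α).trans (hF ▸ uSugeno_le_one hS hm hf)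
  have hG1 : ⨆ β, G β ≤ 1 := hG ▸ uSugeno_le_one hS hm hg
  rw [hF, hG]
  calc star (⨆ α, F α) (⨆ β, G β) ≤ ⨆ α, star (F α) (⨆ β, G β) :=
        map_iSup_le_iSup_map_of_continuousWithinAt (hstar_lc.1 _ hG1 _ (iSup_le hF1))
    _ ≤ ⨆ α, ⨆ β, star (F α) (G β) := iSup_mono fun α =>
        map_iSup_le_iSup_map_of_continuousWithinAt (hstar_lc.2 _ (hF1 α) _ hG1)
    _ ≤ _ := iSup₂_le fun α β => star_le_uSugeno_star hS hstar_maps hstar_mono hcond hm hf hg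
        hf1 hg1 hcom α.2 β.2

end Sufficiency

section Necessity

open Classical in
noncomputable def properSetCapacity (X : Type*) (c : ℝ≥0∞) (A : Set X) : ℝ≥0∞ :=
  if A = ∅ then 0 else if A = univ then 1 else c

lemma isCapacity_properSetCapacity {X : Type*} [MeasurableSpace X] [Nonempty X] {c : ℝ≥0∞}
    (hc : c ≤ 1) : IsCapacity (properSetCapacity X c) := by
  have hle : ∀ A, properSetCapacity X c A ≤ 1 := fun A => by
    unfold properSetCapacity; split_ifs <;> simp [hc]
  have huniv : properSetCapacity X c univ = 1 := by
    rw [properSetCapacity, if_neg univ_nonempty.ne_empty, if_pos rfl]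
  refine ⟨if_pos rfl, huniv, fun A B _ _ hAB => ?_⟩
  by_cases hA : A = ∅
  · simp [properSetCapacity, hA]
  by_cases hBu : B = univ
  · rw [hBu, huniv]
    exact hle A
  have hB : B ≠ ∅ := fun h => hA (subset_empty_iff.1 (h ▸ hAB))
  have hAu : A ≠ univ := fun h => hBu (eq_univ_of_univ_subset (h ▸ hAB))
  simp [properSetCapacity, hA, hAu, hB, hBu]

lemma properSetCapacity_bool_true (c : ℝ≥0∞) : properSetCapacity Bool c {true} = c := by
  have hne : ({true} : Set Bool) ≠ univ := fun h => by
    simpa using (Set.ext_iff.1 h false).2 (mem_univ false)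
  rw [properSetCapacity, if_neg (singleton_ne_empty true), if_neg hne]

variable {S star : ℝ≥0∞ → ℝ≥0∞ → ℝ≥0∞}

theorem condition_of_chebyshevInequality (hS : IsSemicopula S)
    (hstar_maps : ∀ a ∈ Iic (1 : ℝ≥0∞), ∀ b ∈ Iic (1 : ℝ≥0∞), star a b ∈ Iic 1)
    (hstar_mono : Mono2On star (Iic 1) (Iic 1)) (hstar_zero : star 0 1 = 0 ∧ star 1 0 = 0)
    (H : ChebyshevInequality Bool S star) {a b c : ℝ≥0∞} (ha : a ≤ 1) (hb : b ≤ 1)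
    (hc : c ≤ 1) : max (star (S a c) b) (star a (S b c)) ≤ S (star a b) c := by
  set m := properSetCapacity Bool c
  have hm : IsCapacity m := isCapacity_properSetCapacity hc
  have hT : MeasurableSet ({true} : Set Bool) := measurableSet_singleton true
  have hmT : m {true} = c := properSetCapacity_bool_true c
  have hab : star a b ≤ 1 := hstar_maps a ha b hb
  have h01 : (0 : ℝ≥0∞) ∈ Iic 1 := mem_Iic.2 zero_le
  have hind : ∀ v ≤ (1 : ℝ≥0∞), ∀ x, ({true} : Set Bool).indicator (fun _ => v) x ≤ 1 :=
    fun v hv x => (indicator_le_self' (fun _ _ => zero_le) x).trans hv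
  refine max_le ?_ ?_
  · have h0 : star 0 b = 0 := le_antisymm
      ((hstar_mono h01 hb h01 self_mem_Iic le_rfl hb).trans hstar_zero.1.le) zero_le
    have hfg : (fun x => star (({true} : Set Bool).indicator (fun _ => a) x) b)
        = ({true} : Set Bool).indicator fun _ => star a b :=
      (indicator_comp_of_zero (g := fun y => star y b) h0).symm
    calc star (S a c) b
        = star (uSugeno 1 S m univ (({true} : Set Bool).indicator fun _ => a))
            (uSugeno 1 S m univ fun _ => b) := by
          rw [uSugeno_indicator hS hm hT ha, hmT, uSugeno_const hS hm hb]
      _ ≤ _ := H m hm _ _ (measurable_of_finite _) (measurable_of_finite _) (hind a ha)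
          (fun _ => hb) fun _ _ _ _ _ => le_rfl
      _ = S (star a b) c := by rw [hfg, uSugeno_indicator hS hm hT hab, hmT]
  · have h0 : star a 0 = 0 := le_antisymm
      ((hstar_mono ha h01 self_mem_Iic h01 ha le_rfl).trans hstar_zero.2.le) zero_le
    have hfg : (fun x => star a (({true} : Set Bool).indicator (fun _ => b) x))
        = ({true} : Set Bool).indicator fun _ => star a b :=
      (indicator_comp_of_zero (g := fun y => star a y) h0).symm
    calc star a (S b c)
        = star (uSugeno 1 S m univ fun _ => a)
            (uSugeno 1 S m univ (({true} : Set Bool).indicator fun _ => b)) := by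
          rw [uSugeno_indicator hS hm hT hb, hmT, uSugeno_const hS hm ha]
      _ ≤ _ := H m hm _ _ (measurable_of_finite _) (measurable_of_finite _) (fun _ => ha)
          (hind b hb) fun _ _ _ _ h => absurd h (lt_irrefl _)
      _ = S (star a b) c := by rw [hfg, uSugeno_indicator hS hm hT hab, hmT]

end Necessity

theorem statement10
    (S : ℝ≥0∞ → ℝ≥0∞ → ℝ≥0∞) (hS : IsSemicopula S)
    (star : ℝ≥0∞ → ℝ≥0∞ → ℝ≥0∞)
    (hstar_maps : ∀ a ∈ Set.Iic (1 : ℝ≥0∞), ∀ b ∈ Set.Iic (1 : ℝ≥0∞), star a b ∈ Set.Iic 1)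
    (hstar_mono : Mono2On star (Set.Iic 1) (Set.Iic 1))
    (hstar_lc : LeftCont2On star (Set.Iic 1) (Set.Iic 1))
    (hstar_zero : star 0 1 = 0 ∧ star 1 0 = 0) :
    (∀ (Y : Type) [MeasurableSpace Y], ∀ m : Set Y → ℝ≥0∞, IsCapacity m →
      ∀ f g : Y → ℝ≥0∞, Measurable f → Measurable g →
        (∀ x, f x ≤ 1) → (∀ x, g x ≤ 1) → ComonotoneOn Set.univ f g →
          star (uSugeno 1 S m Set.univ f) (uSugeno 1 S m Set.univ g)
            ≤ uSugeno 1 S m Set.univ fun x => star (f x) (g x))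
    ↔
    (∀ a ∈ Set.Iic (1 : ℝ≥0∞), ∀ b ∈ Set.Iic (1 : ℝ≥0∞), ∀ c ∈ Set.Iic (1 : ℝ≥0∞),
      max (star (S a c) b) (star a (S b c)) ≤ S (star a b) c) :=
  ⟨fun H _ ha _ hb _ hc =>
    condition_of_chebyshevInequality hS hstar_maps hstar_mono hstar_zero (H Bool) ha hb hc,
   fun hcond _ _ =>
    chebyshevInequality_of_condition hS hstar_maps hstar_mono hstar_lc hcond⟩
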